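/- (Theorem C, immersion part.) Let I ⊆ ℝ be an open interval, Γ : I → ℝ^{2,3} a smooth curve with ⟨Γ,Γ⟩ = 1, ⟨Γ′,Γ′⟩ = 0 and Γ′ nowhere vanishing, and let C : I → ℝ^{2,3} be smooth with ⟨C,C⟩ = 0, ⟨C,Γ⟩ = ⟨C,Γ′⟩ = 0 and ⟨C,Γ″⟩ ≡ c for a nonzero real constant c. Define T : I × ℝ → ℝ^{2,3} by T(s,θ) = cos θ · C(s) + sin θ · Γ′(s). Then: (i) T(s,θ) ≠ 0 for all (s,θ); (ii) ⟨T,T⟩ ≡ 0; (iii) ⟨T,Γ(s)⟩ ≡ 0, ⟨∂T/∂s, Γ(s)⟩ ≡ 0 and ⟨∂T/∂θ, Γ(s)⟩ ≡ 0; (iv) ⟨∂T/∂θ, ∂T/∂θ⟩ ≡ 0 and ⟨∂T/∂θ, ∂T/∂s⟩ ≡ −c, so that the Gram determinant ⟨∂T/∂s,∂T/∂s⟩⟨∂T/∂θ,∂T/∂θ⟩ − ⟨∂T/∂s,∂T/∂θ⟩² equals −c² everywhere; in particular ∂T/∂s and ∂T/∂θ are linearly independent at every point and the induced metric is Lorentzian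 (taking c = 1, respectively c = η, T is the lift of the left, respectively right, tautological timelike immersion of a generic null curve). -/

import Mathlib

/-- The signature `(2,3)` bilinear form on `ℝ⁵`. -/
noncomputable def ip (X Y : Fin 5 → ℝ) : ℝ :=
  -(X 0 * Y 4 + X 4 * Y 0) - X 1 * Y 1 + X 2 * Y 2 + X 3 * Y 3

/-- The lift `T(s,θ) = cos θ · C(s) + sin θ · Γ′(s)` of a tautological map. -/
noncomputable def tautLift (Γ C : ℝ → Fin 5 → ℝ) (s θ : ℝ) : Fin 5 → ℝ :=
  Real.cos θ • C s + Real.sin θ • deriv Γ s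

lemma ip_comm (X Y : Fin 5 → ℝ) : ip X Y = ip Y X := by simp [ip]; ring

lemma ip_left (p q : ℝ) (X Y Z : Fin 5 → ℝ) :
    ip (p • X + q • Y) Z = p * ip X Z + q * ip Y Z := by
  simp [ip, Pi.add_apply, Pi.smul_apply, smul_eq_mul]; ring

lemma ip_zero (Z : Fin 5 → ℝ) : ip 0 Z = 0 := by simp [ip]

lemma ip_hasDerivAt {f g : ℝ → Fin 5 → ℝ} {f' g' : Fin 5 → ℝ} {x : ℝ}
    (hf : HasDerivAt f f' x) (hg : HasDerivAt g g' x) :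
    HasDerivAt (fun s => ip (f s) (g s)) (ip f' (g x) + ip (f x) g') x := by
  have hfi : ∀ i, HasDerivAt (fun s => f s i) (f' i) x := hasDerivAt_pi.mp hf
  have hgi : ∀ i, HasDerivAt (fun s => g s i) (g' i) x := hasDerivAt_pi.mp hg
  have H := (((((hfi 0).mul (hgi 4)).add ((hfi 4).mul (hgi 0))).neg.sub
      ((hfi 1).mul (hgi 1))).add ((hfi 2).mul (hgi 2))).add ((hfi 3).mul (hgi 3))
  exact H.congr_deriv (by simp [ip]; ring)

lemma deriv_zero_on {F : ℝ → ℝ} {v k s a b : ℝ} (hs : s ∈ Set.Ioo a b)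
    (hF : HasDerivAt F v s) (h : ∀ t ∈ Set.Ioo a b, F t = k) : v = 0 := by
  have he : F =ᶠ[nhds s] fun _ => k :=
    Filter.eventually_of_mem (isOpen_Ioo.mem_nhds hs) h
  have h2 : HasDerivAt (fun _ : ℝ => k) v s := hF.congr_of_eventuallyEq he.symm
  exact h2.unique (hasDerivAt_const s k)

/-- Theorem C, immersion part: if `⟨Γ,Γ⟩ = 1`, `⟨Γ′,Γ′⟩ = 0`, `Γ′ ≠ 0`,
and `C` is null, orthogonal to `Γ` and `Γ′`, with `⟨C,Γ″⟩ ≡ c ≠ 0`, then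
`T(s,θ) = cos θ · C(s) + sin θ · Γ′(s)` satisfies (i) `T ≠ 0`; (ii) `⟨T,T⟩ = 0`;
(iii) `⟨T,Γ⟩ = ⟨∂T/∂s,Γ⟩ = ⟨∂T/∂θ,Γ⟩ = 0`; (iv) `⟨∂T/∂θ,∂T/∂θ⟩ = 0`,
`⟨∂T/∂θ,∂T/∂s⟩ = −c`, the Gram determinant equals `−c²`, and `∂T/∂s`, `∂T/∂θ`
are linearly independent. -/
theorem stmt9 (a b : ℝ) (c : ℝ) (hc : c ≠ 0)
    (Γ C : ℝ → Fin 5 → ℝ) (hΓ : ContDiff ℝ (⊤ : ℕ∞) Γ) (hC : ContDiff ℝ (⊤ : ℕ∞) C)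
    (h1 : ∀ s ∈ Set.Ioo a b, ip (Γ s) (Γ s) = 1)
    (h2 : ∀ s ∈ Set.Ioo a b, ip (deriv Γ s) (deriv Γ s) = 0)
    (h2' : ∀ s ∈ Set.Ioo a b, deriv Γ s ≠ 0)
    (hC1 : ∀ s ∈ Set.Ioo a b, ip (C s) (C s) = 0)
    (hC2 : ∀ s ∈ Set.Ioo a b, ip (C s) (Γ s) = 0)
    (hC3 : ∀ s ∈ Set.Ioo a b, ip (C s) (deriv Γ s) = 0)
    (hC4 : ∀ s ∈ Set.Ioo a b, ip (C s) (deriv (deriv Γ) s) = c) :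
    ∀ s ∈ Set.Ioo a b, ∀ θ : ℝ,
      -- (i)
      tautLift Γ C s θ ≠ 0 ∧
      -- (ii)
      ip (tautLift Γ C s θ) (tautLift Γ C s θ) = 0 ∧
      -- (iii)
      ip (tautLift Γ C s θ) (Γ s) = 0 ∧
      ip (deriv (fun t => tautLift Γ C t θ) s) (Γ s) = 0 ∧
      ip (deriv (fun p => tautLift Γ C s p) θ) (Γ s) = 0 ∧
      -- (iv)
      ip (deriv (fun p => tautLift Γ C s p) θ) (deriv (fun p => tautLift Γ C s p) θ) = 0 ∧
      ip (deriv (fun p => tautLift Γ C s p) θ) (deriv (fun t => tautLift Γ C t θ) s) = -c ∧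
      ip (deriv (fun t => tautLift Γ C t θ) s) (deriv (fun t => tautLift Γ C t θ) s) *
          ip (deriv (fun p => tautLift Γ C s p) θ) (deriv (fun p => tautLift Γ C s p) θ) -
        (ip (deriv (fun t => tautLift Γ C t θ) s) (deriv (fun p => tautLift Γ C s p) θ)) ^ 2 =
          -c ^ 2 ∧
      LinearIndependent ℝ
        ![deriv (fun t => tautLift Γ C t θ) s, deriv (fun p => tautLift Γ C s p) θ] := by
  intro s hs θ
  -- differentiability
  have hΓ' : ContDiff ℝ (⊤ : ℕ∞) (deriv Γ) := by
    have h' : ContDiff ℝ (((⊤ : ℕ∞) : WithTop ℕ∞) + 1) Γ := by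
      rw [show (((⊤ : ℕ∞) : WithTop ℕ∞) + 1) = ((⊤ : ℕ∞) : WithTop ℕ∞) from rfl]; exact hΓ
    exact (contDiff_succ_iff_deriv.mp h').2.2
  have hΓd : ∀ t : ℝ, HasDerivAt Γ (deriv Γ t) t := fun t =>
    ((hΓ.differentiable (by simp)) t).hasDerivAt
  have hΓ'd : ∀ t : ℝ, HasDerivAt (deriv Γ) (deriv (deriv Γ) t) t := fun t =>
    ((hΓ'.differentiable (by simp)) t).hasDerivAt
  have hCd : ∀ t : ℝ, HasDerivAt C (deriv C t) t := fun t =>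
    ((hC.differentiable (by simp)) t).hasDerivAt
  -- orthogonality identities obtained by differentiation
  have iA : ∀ t ∈ Set.Ioo a b, ip (deriv Γ t) (Γ t) = 0 := by
    intro t ht
    have h := deriv_zero_on ht (ip_hasDerivAt (hΓd t) (hΓd t)) h1
    have hsym : ip (Γ t) (deriv Γ t) = ip (deriv Γ t) (Γ t) := ip_comm _ _
    linarith
  have iB : ip (deriv (deriv Γ) s) (Γ s) = 0 := by
    have h := deriv_zero_on hs (ip_hasDerivAt (hΓ'd s) (hΓd s)) iA
    have := h2 s hs
    linarith
  have iC : ip (deriv C s) (C s) = 0 := by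
    have h := deriv_zero_on hs (ip_hasDerivAt (hCd s) (hCd s)) hC1
    have hsym : ip (C s) (deriv C s) = ip (deriv C s) (C s) := ip_comm _ _
    linarith
  have iD : ip (deriv C s) (Γ s) = 0 := by
    have h := deriv_zero_on hs (ip_hasDerivAt (hCd s) (hΓd s)) hC2
    have hsym : ip (C s) (deriv Γ s) = ip (deriv Γ s) (C s) := ip_comm _ _
    have := hC3 s hs
    linarith [ip_comm (C s) (deriv Γ s)]
  have iE : ip (deriv C s) (deriv Γ s) = -c := by
    have h := deriv_zero_on hs (ip_hasDerivAt (hCd s) (hΓ'd s)) hC3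
    have := hC4 s hs
    linarith
  have iF : ip (deriv (deriv Γ) s) (deriv Γ s) = 0 := by
    have h := deriv_zero_on hs (ip_hasDerivAt (hΓ'd s) (hΓ'd s)) h2
    have hsym : ip (deriv Γ s) (deriv (deriv Γ) s) = ip (deriv (deriv Γ) s) (deriv Γ s) :=
      ip_comm _ _
    linarith
  -- the partial derivatives of T
  have hTs : HasDerivAt (fun t => tautLift Γ C t θ)
      (Real.cos θ • deriv C s + Real.sin θ • deriv (deriv Γ) s) s := by
    exact ((hCd s).const_smul (Real.cos θ)).add ((hΓ'd s).const_smul (Real.sin θ))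
  have hTθ : HasDerivAt (fun p => tautLift Γ C s p)
      ((-Real.sin θ) • C s + Real.cos θ • deriv Γ s) θ := by
    have h1 := (Real.hasDerivAt_cos θ).smul_const (C s)
    have h2 := (Real.hasDerivAt_sin θ).smul_const (deriv Γ s)
    exact (h1.add h2)
  have eTs : deriv (fun t => tautLift Γ C t θ) s
      = Real.cos θ • deriv C s + Real.sin θ • deriv (deriv Γ) s := hTs.deriv
  have eTθ : deriv (fun p => tautLift Γ C s p) θ
      = (-Real.sin θ) • C s + Real.cos θ • deriv Γ s := hTθ.deriv
  -- bilinear expansion helper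
  have expand : ∀ (p q r w : ℝ) (X Y Z W : Fin 5 → ℝ),
      ip (p • X + q • Y) (r • Z + w • W)
        = p * r * ip X Z + p * w * ip X W + q * r * ip Y Z + q * w * ip Y W := by
    intro p q r w X Y Z W
    rw [ip_left, ip_comm X _, ip_comm Y _, ip_left, ip_left,
      ip_comm Z X, ip_comm W X, ip_comm Z Y, ip_comm W Y]
    ring
  have pyth : Real.sin θ ^ 2 + Real.cos θ ^ 2 = 1 := Real.sin_sq_add_cos_sq θ
  have hCC := hC1 s hs
  have hCG := hC2 s hs
  have hCG' := hC3 s hs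
  have hCG'' := hC4 s hs
  have hGG' := h2 s hs
  have iAs := iA s hs
  -- key ip values
  have vTT : ip (tautLift Γ C s θ) (tautLift Γ C s θ) = 0 := by
    rw [tautLift, expand]
    rw [hCC, hCG', hGG', ip_comm (deriv Γ s) (C s), hCG']; ring
  have vTG : ip (tautLift Γ C s θ) (Γ s) = 0 := by
    rw [tautLift, ip_left, hCG, iAs]; ring
  have vTsG : ip (deriv (fun t => tautLift Γ C t θ) s) (Γ s) = 0 := by
    rw [eTs, ip_left, iD, iB]; ring
  have vTθG : ip (deriv (fun p => tautLift Γ C s p) θ) (Γ s) = 0 := by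
    rw [eTθ, ip_left, hCG, iAs]; ring
  have vTθTθ : ip (deriv (fun p => tautLift Γ C s p) θ) (deriv (fun p => tautLift Γ C s p) θ)
      = 0 := by
    rw [eTθ, expand, hCC, hCG', hGG', ip_comm (deriv Γ s) (C s), hCG']; ring
  have vTθTs : ip (deriv (fun p => tautLift Γ C s p) θ) (deriv (fun t => tautLift Γ C t θ) s)
      = -c := by
    rw [eTθ, eTs, expand, ip_comm (C s) (deriv C s), iC, hCG'',
      ip_comm (deriv Γ s) (deriv C s), iE, ip_comm (deriv Γ s) (deriv (deriv Γ) s), iF]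
    linear_combination (-c) * pyth
  have vTsTθ : ip (deriv (fun t => tautLift Γ C t θ) s) (deriv (fun p => tautLift Γ C s p) θ)
      = -c := by rw [ip_comm]; exact vTθTs
  refine ⟨?_, vTT, vTG, vTsG, vTθG, vTθTθ, vTθTs, ?_, ?_⟩
  · -- (i) T ≠ 0
    intro h0
    have e1 : ip (tautLift Γ C s θ) (deriv (deriv Γ) s) = c * Real.cos θ := by
      rw [tautLift, ip_left, hCG'', ip_comm (deriv Γ s) _, iF]; ring
    have e2 : ip (tautLift Γ C s θ) (deriv C s) = -c * Real.sin θ := by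
      rw [tautLift, ip_left, ip_comm (C s) _, iC, ip_comm (deriv Γ s) _, iE]; ring
    rw [h0, ip_zero] at e1 e2
    have hcos : Real.cos θ = 0 := by
      rcases mul_eq_zero.mp e1.symm with h | h
      · exact absurd h hc
      · exact h
    have hsin : Real.sin θ = 0 := by
      have : -c * Real.sin θ = 0 := e2.symm
      rcases mul_eq_zero.mp this with h | h
      · exact absurd (neg_eq_zero.mp h) hc
      · exact h
    rw [hsin, hcos] at pyth; norm_num at pyth
  · -- Gram determinant
    rw [vTθTθ, vTsTθ]; ring
  · -- linear independence
    rw [LinearIndependent.pair_iff]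
    intro x y hxy
    have hip := congrArg (fun v => ip v (deriv (fun p => tautLift Γ C s p) θ)) hxy
    simp only [ip_left, ip_zero] at hip
    rw [vTsTθ, vTθTθ] at hip
    have hx : x = 0 := by
      have : x * -c = 0 := by linarith
      rcases mul_eq_zero.mp this with h | h
      · exact h
      · exact absurd (neg_eq_zero.mp h) hc
    subst hx
    refine ⟨rfl, ?_⟩
    have hip2 := congrArg (fun v => ip v (deriv (fun t => tautLift Γ C t θ) s)) hxy
    simp only [ip_left, ip_zero] at hip2
    rw [vTθTs] at hip2
    have : y * -c = 0 := by linarith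
    rcases mul_eq_zero.mp this with h | h
    · exact h
    · exact absurd (neg_eq_zero.mp h) hc
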